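/- arXiv:1904.12157 — 2 statements merged into one kernel-verified Lean document; each statement's English description precedes it below -/
import Mathlib

section
/- Let d ≥ 1 and let π^d be a positive, continuously differentiable probability density on ℝ^d, with roughness I_d(x) = (1/d)·Σ_{i=1}^d (∂ log π^d(x)/∂x_i)². Define h(ℓ) = 2ℓ²·E_{X∼π^d}[Φ(−ℓ·√(I_d(X))/2)] and the asymptotic acceptance rate a(ℓ) = 2·E_{X∼π^d}[Φ(−ℓ·√(I_d(X))/2)] for ℓ > 0. If ℓ̂ ∈ (0,∞) satisfies h(ℓ̂) ≥ h(ℓ) for all ℓ > 0, then a(ℓ̂) ≤ 2Φ(−m̂), where m̂ is the unique positive real number satisfying 2Φ(−m̂) = m̂·φ(m̂); in particular a(ℓ̂) ≤ 0.2345 (i.e., a(ℓ̂) ≤ 0.234 to three decimal places). -/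
/-!
Write `U = ℓ̂ √(I_d(X)) / 2` and `ψ(u) = 2Φ(-u) - u φ(u)`, so that `a(ℓ̂) = E[2Φ(-U)]` and `m̂` is
the positive zero of `ψ`. Differentiating `h` under the integral, the first-order condition at the
maximiser `ℓ̂` reads `E[ψ(U)] = 0`. Mills' ratio gives `m̂² ≤ 2`, and for `c = 2 / (3 - m̂²) > 0`
the function `2Φ(-u) - c ψ(u)` is maximal on `[0, ∞)` at `u = m̂`, where it equals
`m̂ φ(m̂) = 2Φ(-m̂)`; taking expectations gives `a(ℓ̂) ≤ 2Φ(-m̂)`.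
Numerically, `ψ` decreases on `[0, √3]` and `ψ(1.185) > 0`, so `m̂ ≥ 1.185`, and as `u φ(u)`
decreases on `[1, ∞)`, `m̂ φ(m̂) ≤ 1.185 φ(1.185) < 0.2345`.
-/

open MeasureTheory

/-- The standard normal cumulative distribution function
`Φ(x) = ∫_{−∞}^x (2π)^{−1/2} e^{−t²/2} dt`. -/
noncomputable def Phi (x : ℝ) : ℝ :=
  ∫ t in Set.Iic x, (Real.sqrt (2 * Real.pi))⁻¹ * Real.exp (-t ^ 2 / 2)

/-- The standard normal density `φ(x) = (2π)^{−1/2} e^{−x²/2}`. -/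
noncomputable def phi (x : ℝ) : ℝ :=
  (Real.sqrt (2 * Real.pi))⁻¹ * Real.exp (-x ^ 2 / 2)

/-- The partial derivative `∂ log π(x) / ∂xᵢ`. -/
noncomputable def pdLog {d : ℕ} (π : (Fin d → ℝ) → ℝ) (i : Fin d) (x : Fin d → ℝ) : ℝ :=
  fderiv ℝ (fun y => Real.log (π y)) x (Pi.single i 1)

/-- The roughness `I_d(x) = (1/d)·Σᵢ (∂ log π(x)/∂xᵢ)²`. -/
noncomputable def rough {d : ℕ} (π : (Fin d → ℝ) → ℝ) (x : Fin d → ℝ) : ℝ :=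
  (1 / (d : ℝ)) * ∑ i, (pdLog π i x) ^ 2

/-- `h(ℓ) = 2ℓ²·E_{X∼π}[Φ(−ℓ·√(I_d(X))/2)]`. -/
noncomputable def hfun {d : ℕ} (π : (Fin d → ℝ) → ℝ) (ℓ : ℝ) : ℝ :=
  2 * ℓ ^ 2 * ∫ x : Fin d → ℝ, Phi (-(ℓ * Real.sqrt (rough π x)) / 2) * π x

/-- The asymptotic acceptance rate `a(ℓ) = 2·E_{X∼π}[Φ(−ℓ·√(I_d(X))/2)]`. -/
noncomputable def afun {d : ℕ} (π : (Fin d → ℝ) → ℝ) (ℓ : ℝ) : ℝ :=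
  2 * ∫ x : Fin d → ℝ, Phi (-(ℓ * Real.sqrt (rough π x)) / 2) * π x

open Set Filter Topology

lemma phi_pos (x : ℝ) : 0 < phi x := by
  unfold phi; positivity

lemma phi_neg (x : ℝ) : phi (-x) = phi x := by
  simp only [phi, neg_sq]

lemma continuous_phi : Continuous phi := by
  unfold phi; fun_prop

lemma phi_eq_mul_exp_neg_mul_sq :
    phi = fun x => (Real.sqrt (2 * Real.pi))⁻¹ * Real.exp (-(1 / 2) * x ^ 2) := by
  ext x; unfold phi; ring_nf

lemma integrable_phi : Integrable phi := by
  rw [phi_eq_mul_exp_neg_mul_sq]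
  exact (integrable_exp_neg_mul_sq (by norm_num)).const_mul _

lemma integral_phi : ∫ x, phi x = 1 := by
  rw [phi_eq_mul_exp_neg_mul_sq, integral_const_mul, integral_gaussian,
    show Real.pi / (1 / 2) = 2 * Real.pi by ring]
  exact inv_mul_cancel₀ (by positivity)

lemma hasDerivAt_phi (x : ℝ) : HasDerivAt phi (-x * phi x) x := by
  unfold phi
  refine ((((hasDerivAt_pow 2 x).fun_neg.div_const 2).exp).const_mul
    (Real.sqrt (2 * Real.pi))⁻¹).congr_deriv ?_
  simp only [Nat.cast_ofNat]
  ring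

lemma integrable_neg_mul_phi : Integrable fun t => -t * phi t := by
  refine ((integrable_mul_exp_neg_mul_sq (b := 1 / 2) (by norm_num)).const_mul
    (-(Real.sqrt (2 * Real.pi))⁻¹)).congr (Eventually.of_forall fun t => ?_)
  simp only [phi_eq_mul_exp_neg_mul_sq]
  ring

lemma tendsto_phi_atBot : Tendsto phi atBot (𝓝 0) := by
  have hsq : Tendsto (fun x : ℝ => x ^ 2) atBot atTop := by
    simpa only [Function.comp_def, neg_sq] using
      (tendsto_pow_atTop (α := ℝ) two_ne_zero).comp tendsto_neg_atBot_atTop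
  have h := (Real.tendsto_exp_atBot.comp (tendsto_neg_atTop_atBot.comp
    (hsq.atTop_div_const two_pos))).const_mul (Real.sqrt (2 * Real.pi))⁻¹
  rw [mul_zero] at h
  exact h.congr fun x => by simp only [phi, Function.comp_apply, neg_div]

lemma integral_Iic_neg_mul_phi (c : ℝ) : ∫ t in Iic c, -t * phi t = phi c := by
  rw [integral_Iic_of_hasDerivAt_of_tendsto' (fun t _ => hasDerivAt_phi t)
    integrable_neg_mul_phi.integrableOn tendsto_phi_atBot, sub_zero]

lemma Phi_eq_setIntegral_phi (x : ℝ) : Phi x = ∫ t in Iic x, phi t := rfl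

lemma Phi_sub_Phi (a b : ℝ) : Phi b - Phi a = ∫ t in a..b, phi t :=
  intervalIntegral.integral_Iic_sub_Iic integrable_phi.integrableOn integrable_phi.integrableOn

lemma hasDerivAt_Phi (x : ℝ) : HasDerivAt Phi (phi x) x := by
  have h := (intervalIntegral.integral_hasDerivAt_right (continuous_phi.intervalIntegrable 0 x)
    (continuous_phi.stronglyMeasurableAtFilter _ _) continuous_phi.continuousAt).const_add (Phi 0)
  refine h.congr_of_eventuallyEq (Eventually.of_forall fun y => ?_)
  simp only [← Phi_sub_Phi, add_sub_cancel]

lemma continuous_Phi : Continuous Phi :=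
  continuous_iff_continuousAt.mpr fun x => (hasDerivAt_Phi x).continuousAt

lemma hasDerivAt_Phi_neg (u : ℝ) : HasDerivAt (fun u => Phi (-u)) (-phi u) u := by
  simpa only [Function.comp_def, phi_neg, mul_neg_one] using
    (hasDerivAt_Phi (-u)).comp u (hasDerivAt_neg u)

lemma Phi_add_Phi_neg (x : ℝ) : Phi x + Phi (-x) = 1 := by
  have h : Phi (-x) = ∫ t in Ioi x, phi t := by
    rw [Phi_eq_setIntegral_phi, ← integral_comp_neg_Ioi]
    simp only [phi_neg]
  rw [h, Phi_eq_setIntegral_phi, intervalIntegral.integral_Iic_add_Ioi integrable_phi.integrableOn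
    integrable_phi.integrableOn, integral_phi]

lemma Phi_zero : Phi 0 = 1 / 2 := by
  have h := Phi_add_Phi_neg 0
  rw [neg_zero] at h
  linarith

lemma Phi_nonneg (x : ℝ) : 0 ≤ Phi x :=
  setIntegral_nonneg measurableSet_Iic fun t _ => (phi_pos t).le

lemma abs_Phi_le_one (x : ℝ) : |Phi x| ≤ 1 := by
  rw [abs_of_nonneg (Phi_nonneg x)]
  linarith [Phi_add_Phi_neg x, Phi_nonneg (-x)]

lemma Phi_neg_le_phi_div {a : ℝ} (ha : 0 < a) : Phi (-a) ≤ phi a / a := by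
  calc Phi (-a) ≤ ∫ t in Iic (-a), a⁻¹ * (-t * phi t) := by
        rw [Phi_eq_setIntegral_phi]
        refine setIntegral_mono_on integrable_phi.integrableOn
          (integrable_neg_mul_phi.integrableOn.const_mul a⁻¹) measurableSet_Iic fun t ht => ?_
        have h1 : 1 ≤ a⁻¹ * -t := by
          rw [inv_mul_eq_div, le_div_iff₀ ha]; linarith [mem_Iic.mp ht]
        nlinarith [phi_pos t]
    _ = phi a / a := by
        rw [integral_const_mul, integral_Iic_neg_mul_phi, phi_neg, inv_mul_eq_div]

lemma hasDerivAt_mul_phi (u : ℝ) : HasDerivAt (fun u => u * phi u) ((1 - u ^ 2) * phi u) u := by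
  refine ((hasDerivAt_id' u).fun_mul (hasDerivAt_phi u)).congr_deriv ?_
  ring

lemma abs_mul_phi_le_one (u : ℝ) : |u * phi u| ≤ 1 := by
  have hexp : |u| ≤ Real.exp (u ^ 2 / 2) := by
    nlinarith [Real.add_one_le_exp (u ^ 2 / 2), sq_abs u, sq_nonneg (|u| - 1)]
  have hsqrt : 1 ≤ Real.sqrt (2 * Real.pi) := by
    rw [Real.one_le_sqrt]; nlinarith [Real.pi_gt_three]
  rw [abs_mul, abs_of_pos (phi_pos u), phi, neg_div, Real.exp_neg]
  calc |u| * ((Real.sqrt (2 * Real.pi))⁻¹ * (Real.exp (u ^ 2 / 2))⁻¹)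
      ≤ Real.exp (u ^ 2 / 2) * (1 * (Real.exp (u ^ 2 / 2))⁻¹) := by
        gcongr; exact inv_le_one_of_one_le₀ hsqrt
    _ = 1 := by rw [one_mul, mul_inv_cancel₀ (Real.exp_pos _).ne']

lemma antitoneOn_mul_phi : AntitoneOn (fun u => u * phi u) (Ici 1) := by
  refine antitoneOn_of_hasDerivWithinAt_nonpos (convex_Ici 1)
    (continuous_id.mul continuous_phi).continuousOn
    (fun u _ => (hasDerivAt_mul_phi u).hasDerivWithinAt) fun u hu => ?_
  rw [interior_Ici, mem_Ioi] at hu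
  exact mul_nonpos_of_nonpos_of_nonneg (by nlinarith) (phi_pos u).le

noncomputable def psi (u : ℝ) : ℝ := 2 * Phi (-u) - u * phi u

lemma hasDerivAt_psi (u : ℝ) : HasDerivAt psi ((u ^ 2 - 3) * phi u) u := by
  refine (((hasDerivAt_Phi_neg u).const_mul 2).sub (hasDerivAt_mul_phi u)).congr_deriv ?_
  ring

lemma continuous_psi : Continuous psi :=
  continuous_iff_continuousAt.mpr fun u => (hasDerivAt_psi u).continuousAt

lemma abs_psi_le (u : ℝ) : |psi u| ≤ 3 := by
  have h := abs_sub (2 * Phi (-u)) (u * phi u)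
  rw [abs_mul, abs_two] at h
  unfold psi
  linarith [abs_Phi_le_one (-u), abs_mul_phi_le_one u]

lemma strictAntiOn_psi : StrictAntiOn psi (Icc 0 (Real.sqrt 3)) := by
  refine strictAntiOn_of_hasDerivWithinAt_neg (convex_Icc _ _) continuous_psi.continuousOn
    (fun u _ => (hasDerivAt_psi u).hasDerivWithinAt) fun u hu => ?_
  rw [interior_Icc] at hu
  have hu3 : u ^ 2 < 3 := by
    rw [← Real.sq_sqrt (show (0 : ℝ) ≤ 3 by norm_num)]
    exact pow_lt_pow_left₀ hu.2 hu.1.le two_ne_zero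
  exact mul_neg_of_neg_of_pos (by linarith) (phi_pos u)

lemma sq_le_two_of_psi_eq_zero {m : ℝ} (hm : 0 < m) (hψ : psi m = 0) : m ^ 2 ≤ 2 := by
  have hmills := Phi_neg_le_phi_div hm
  have hmphi : m * phi m ≤ 2 * phi m / m := by
    unfold psi at hψ; rw [mul_div_assoc]; linarith
  rw [le_div_iff₀ hm] at hmphi
  nlinarith [phi_pos m]

lemma two_mul_Phi_neg_le {m u : ℝ} (hm : 0 < m) (hm3 : m ^ 2 < 3) (hψ : psi m = 0)
    (hu : 0 ≤ u) :
    2 * Phi (-u) ≤ m * phi m + 2 / (3 - m ^ 2) * psi u := by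
  set c := 2 / (3 - m ^ 2)
  have hc0 : 0 < c := div_pos two_pos (by linarith)
  set G : ℝ → ℝ := fun u => 2 * Phi (-u) - c * psi u
  -- this choice of `c` puts the critical point of `G` on `(0, ∞)` at `u = m`
  have hG : ∀ u, HasDerivAt G (c * phi u * (m ^ 2 - u ^ 2)) u := fun u => by
    refine (((hasDerivAt_Phi_neg u).const_mul 2).sub
      ((hasDerivAt_psi u).const_mul c)).congr_deriv ?_
    have : c * (3 - m ^ 2) = 2 := div_mul_cancel₀ 2 (by linarith)
    linear_combination phi u * this
  have hGc : Continuous G := continuous_iff_continuousAt.mpr fun u => (hG u).continuousAt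
  have hGm : G m = m * phi m := by
    simp only [G, hψ, mul_zero, sub_zero]; unfold psi at hψ; linarith
  suffices G u ≤ G m by simp only [G] at this; linarith
  rcases le_total u m with hum | hmu
  · refine monotoneOn_of_hasDerivWithinAt_nonneg (convex_Icc 0 m) hGc.continuousOn
      (fun v _ => (hG v).hasDerivWithinAt) (fun v hv => ?_) ⟨hu, hum⟩ ⟨hm.le, le_rfl⟩ hum
    rw [interior_Icc] at hv
    have : 0 ≤ m ^ 2 - v ^ 2 := by nlinarith [hv.1, hv.2]
    exact mul_nonneg (mul_pos hc0 (phi_pos v)).le this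
  · refine antitoneOn_of_hasDerivWithinAt_nonpos (convex_Ici m) hGc.continuousOn
      (fun v _ => (hG v).hasDerivWithinAt) (fun v hv => ?_) self_mem_Ici hmu hmu
    rw [interior_Ici, mem_Ioi] at hv
    have : m ^ 2 - v ^ 2 ≤ 0 := by nlinarith
    exact mul_nonpos_of_nonneg_of_nonpos (mul_pos hc0 (phi_pos v)).le this

-- The last coefficient is the remainder bound `7 / (6! · 6)` of `Real.exp_bound`.
lemma exp_neg_le_taylor {x : ℝ} (h0 : 0 ≤ x) (h1 : x ≤ 1) :
    Real.exp (-x) ≤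
      1 - x + x ^ 2 / 2 - x ^ 3 / 6 + x ^ 4 / 24 - x ^ 5 / 120 + 7 * x ^ 6 / 4320 := by
  have h := Real.exp_bound (x := -x) (by rwa [abs_neg, abs_of_nonneg h0]) (n := 6) (by norm_num)
  norm_num [Finset.sum_range_succ, Nat.factorial, abs_of_nonneg h0] at h
  linarith [(abs_le.mp h).2]

lemma integral_exp_neg_sq_half_le {b : ℝ} (hb0 : 0 ≤ b) (hb : b ^ 2 ≤ 2) :
    ∫ t in (0 : ℝ)..b, Real.exp (-t ^ 2 / 2) ≤
      b - b ^ 3 / 6 + b ^ 5 / 40 - b ^ 7 / 336 + b ^ 9 / 3456 - b ^ 11 / 42240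
        + 7 * b ^ 13 / 3594240 := by
  set P : ℝ → ℝ := fun t => t - t ^ 3 / 6 + t ^ 5 / 40 - t ^ 7 / 336 + t ^ 9 / 3456
    - t ^ 11 / 42240 + 7 * t ^ 13 / 3594240
  set p : ℝ → ℝ := fun t => 1 - t ^ 2 / 2 + (t ^ 2 / 2) ^ 2 / 2 - (t ^ 2 / 2) ^ 3 / 6
    + (t ^ 2 / 2) ^ 4 / 24 - (t ^ 2 / 2) ^ 5 / 120 + 7 * (t ^ 2 / 2) ^ 6 / 4320
  have hP : ∀ t, HasDerivAt P (p t) t := fun t => by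
    refine (((((((hasDerivAt_id' t).sub ((hasDerivAt_pow 3 t).div_const 6)).add
      ((hasDerivAt_pow 5 t).div_const 40)).sub ((hasDerivAt_pow 7 t).div_const 336)).add
      ((hasDerivAt_pow 9 t).div_const 3456)).sub ((hasDerivAt_pow 11 t).div_const 42240)).add
      (((hasDerivAt_pow 13 t).const_mul 7).div_const 3594240)).congr_deriv ?_
    simp only [p, Nat.cast_ofNat]
    ring
  have hp : Continuous p := by fun_prop
  calc ∫ t in (0 : ℝ)..b, Real.exp (-t ^ 2 / 2) ≤ ∫ t in (0 : ℝ)..b, p t := by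
        refine intervalIntegral.integral_mono_on hb0
          (by apply Continuous.intervalIntegrable; fun_prop) (hp.intervalIntegrable 0 b)
          fun t ht => ?_
        rw [neg_div]
        exact exp_neg_le_taylor (by positivity) (by nlinarith [ht.1, ht.2])
    _ = P b := by
        rw [intervalIntegral.integral_eq_sub_of_hasDerivAt (fun t _ => hP t)
          (hp.intervalIntegrable 0 b)]
        simp only [P]
        ring

lemma sqrt_two_pi_gt : (2.50662 : ℝ) < Real.sqrt (2 * Real.pi) := by
  rw [Real.lt_sqrt (by norm_num)]
  linarith [Real.pi_gt_d6]

lemma psi_eq (b : ℝ) :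
    psi b = 1 - (2 * (∫ t in (0 : ℝ)..b, Real.exp (-t ^ 2 / 2)) + b * Real.exp (-b ^ 2 / 2)) /
      Real.sqrt (2 * Real.pi) := by
  have hPhi : Phi (-b) = 1 / 2 - (Real.sqrt (2 * Real.pi))⁻¹ *
      ∫ t in (0 : ℝ)..b, Real.exp (-t ^ 2 / 2) := by
    rw [← intervalIntegral.integral_const_mul]
    linarith [Phi_add_Phi_neg b, Phi_sub_Phi 0 b, Phi_zero, show
      (∫ t in (0 : ℝ)..b, phi t) = ∫ t in (0 : ℝ)..b, (Real.sqrt (2 * Real.pi))⁻¹ *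
        Real.exp (-t ^ 2 / 2) from rfl]
  rw [psi, hPhi, phi]
  ring

lemma psi_237_div_200_pos : 0 < psi (237 / 200) := by
  have hI := integral_exp_neg_sq_half_le (b := 237 / 200) (by norm_num) (by norm_num)
  have hE := exp_neg_le_taylor (x := (237 / 200) ^ 2 / 2) (by norm_num) (by norm_num)
  have hs := sqrt_two_pi_gt
  rw [psi_eq, sub_pos, div_lt_one (by linarith), neg_div]
  set s := Real.sqrt (2 * Real.pi)
  norm_num at hI hE ⊢
  linarith

lemma mul_phi_237_div_200_le : 237 / 200 * phi (237 / 200) ≤ 0.2345 := by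
  have hE := exp_neg_le_taylor (x := (237 / 200) ^ 2 / 2) (by norm_num) (by norm_num)
  have hs := sqrt_two_pi_gt
  rw [phi, neg_div, mul_left_comm, inv_mul_le_iff₀ (by linarith)]
  set s := Real.sqrt (2 * Real.pi)
  norm_num at hE ⊢
  linarith

lemma le_of_psi_eq_zero {m : ℝ} (hm : 0 < m) (hψ : psi m = 0) : 237 / 200 ≤ m := by
  by_contra! hlt
  have hm3 : m ≤ Real.sqrt 3 :=
    Real.le_sqrt_of_sq_le (by linarith [sq_le_two_of_psi_eq_zero hm hψ])
  have hb3 : (237 / 200 : ℝ) ≤ Real.sqrt 3 := Real.le_sqrt_of_sq_le (by norm_num)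
  have := strictAntiOn_psi ⟨hm.le, hm3⟩ ⟨by norm_num, hb3⟩ hlt
  linarith [psi_237_div_200_pos]

section WeightedExpectation

variable {α : Type*} [MeasurableSpace α] {μ : Measure α} {p R : α → ℝ}

lemma integrable_Phi_mul (hp : Integrable p μ) (hR : Measurable R) (ℓ : ℝ) :
    Integrable (fun x => Phi (-(ℓ * R x) / 2) * p x) μ :=
  hp.bdd_mul
    (continuous_Phi.measurable.comp ((hR.const_mul ℓ).neg.div_const 2)).aestronglyMeasurable
    (Eventually.of_forall fun _ => abs_Phi_le_one _)

lemma integrable_psi_mul (hp : Integrable p μ) (hR : Measurable R) (ℓ : ℝ) :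
    Integrable (fun x => psi (ℓ * R x / 2) * p x) μ :=
  hp.bdd_mul (continuous_psi.measurable.comp ((hR.const_mul ℓ).div_const 2)).aestronglyMeasurable
    (Eventually.of_forall fun _ => abs_psi_le _)

lemma hasDerivAt_integral_Phi_mul (hp : Integrable p μ) (hR : Measurable R) {ℓ₀ : ℝ}
    (hℓ₀ : 0 < ℓ₀) :
    HasDerivAt (fun ℓ => ∫ x, Phi (-(ℓ * R x) / 2) * p x ∂μ)
      (∫ x, -(R x / 2) * phi (ℓ₀ * R x / 2) * p x ∂μ) ℓ₀ := by
  have hF' : AEStronglyMeasurable (fun x => -(R x / 2) * phi (ℓ₀ * R x / 2) * p x) μ :=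
    ((hR.div_const 2).neg.mul (continuous_phi.measurable.comp ((hR.const_mul ℓ₀).div_const 2))
      ).aestronglyMeasurable.mul hp.aestronglyMeasurable
  have hbound : ∀ᵐ x ∂μ, ∀ ℓ ∈ Metric.ball ℓ₀ (ℓ₀ / 2),
      ‖-(R x / 2) * phi (ℓ * R x / 2) * p x‖ ≤ 2 / ℓ₀ * ‖p x‖ := by
    refine Eventually.of_forall fun x ℓ hℓ => ?_
    have hℓ : ℓ₀ / 2 < ℓ := by
      rw [Metric.mem_ball, Real.dist_eq, abs_lt] at hℓ; linarith
    have hℓ0 : 0 < ℓ := by linarith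
    have hrw : -(R x / 2) * phi (ℓ * R x / 2) * p x =
        -ℓ⁻¹ * (ℓ * R x / 2 * phi (ℓ * R x / 2)) * p x := by
      field_simp
    rw [hrw, norm_mul, norm_mul, norm_neg, Real.norm_eq_abs (_ * _), norm_inv,
      Real.norm_of_nonneg hℓ0.le]
    calc ℓ⁻¹ * |ℓ * R x / 2 * phi (ℓ * R x / 2)| * ‖p x‖ ≤ ℓ⁻¹ * 1 * ‖p x‖ := by
          gcongr; exact abs_mul_phi_le_one _
      _ ≤ 2 / ℓ₀ * ‖p x‖ := by
          rw [mul_one]; gcongr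
          rw [inv_le_comm₀ hℓ0 (by positivity), inv_div]; exact hℓ.le
  have hderiv : ∀ᵐ x ∂μ, ∀ ℓ ∈ Metric.ball ℓ₀ (ℓ₀ / 2), HasDerivAt
      (fun ℓ => Phi (-(ℓ * R x) / 2) * p x) (-(R x / 2) * phi (ℓ * R x / 2) * p x) ℓ := by
    refine Eventually.of_forall fun x ℓ _ => ?_
    refine (((hasDerivAt_Phi _).comp ℓ
      (((hasDerivAt_id' ℓ).mul_const (R x)).fun_neg.div_const 2)).mul_const (p x)).congr_deriv ?_
    rw [neg_div, phi_neg]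
    ring
  exact (hasDerivAt_integral_of_dominated_loc_of_deriv_le
    (Metric.ball_mem_nhds ℓ₀ (half_pos hℓ₀))
    (Eventually.of_forall fun ℓ => (integrable_Phi_mul hp hR ℓ).aestronglyMeasurable)
    (integrable_Phi_mul hp hR ℓ₀) hF' hbound (hp.norm.const_mul _) hderiv).2

lemma integral_psi_mul_eq_zero_of_isLocalMax (hp : Integrable p μ) (hR : Measurable R)
    {ℓ₀ : ℝ} (hℓ₀ : 0 < ℓ₀)
    (hmax : IsLocalMax (fun ℓ => ℓ ^ 2 * ∫ x, Phi (-(ℓ * R x) / 2) * p x ∂μ) ℓ₀) :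
    ∫ x, psi (ℓ₀ * R x / 2) * p x ∂μ = 0 := by
  set A := ∫ x, Phi (-(ℓ₀ * R x) / 2) * p x ∂μ
  set A' := ∫ x, -(R x / 2) * phi (ℓ₀ * R x / 2) * p x ∂μ
  have hcrit : 2 * ℓ₀ * A + ℓ₀ ^ 2 * A' = 0 :=
    hmax.hasDerivAt_eq_zero (((hasDerivAt_pow 2 ℓ₀).fun_mul
      (hasDerivAt_integral_Phi_mul hp hR hℓ₀)).congr_deriv (by simp only [Nat.cast_ofNat]; ring))
  have hA' : ℓ₀ * A' = ∫ x, psi (ℓ₀ * R x / 2) * p x ∂μ - 2 * A := by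
    rw [← integral_const_mul, ← integral_const_mul,
      ← integral_sub (integrable_psi_mul hp hR ℓ₀) ((integrable_Phi_mul hp hR ℓ₀).const_mul 2)]
    refine integral_congr_ae (Eventually.of_forall fun x => ?_)
    simp only [psi, neg_div]
    ring
  have : ℓ₀ * ∫ x, psi (ℓ₀ * R x / 2) * p x ∂μ = 0 := by
    linear_combination hcrit - ℓ₀ * hA'
  exact (mul_eq_zero.mp this).resolve_left hℓ₀.ne'

lemma two_mul_integral_Phi_mul_le (hp : Integrable p μ) (hp0 : ∀ x, 0 ≤ p x)
    (hR : Measurable R) (hR0 : ∀ x, 0 ≤ R x) {ℓ₀ : ℝ} (hℓ₀ : 0 < ℓ₀)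
    (hmax : IsLocalMax (fun ℓ => ℓ ^ 2 * ∫ x, Phi (-(ℓ * R x) / 2) * p x ∂μ) ℓ₀)
    {m : ℝ} (hm : 0 < m) (hm3 : m ^ 2 < 3) (hψ : psi m = 0) :
    2 * ∫ x, Phi (-(ℓ₀ * R x) / 2) * p x ∂μ ≤ m * phi m * ∫ x, p x ∂μ := by
  set c := 2 / (3 - m ^ 2)
  have hpsi := (integrable_psi_mul hp hR ℓ₀).const_mul c
  calc 2 * ∫ x, Phi (-(ℓ₀ * R x) / 2) * p x ∂μ
      = ∫ x, 2 * (Phi (-(ℓ₀ * R x) / 2) * p x) ∂μ := (integral_const_mul _ _).symm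
    _ ≤ ∫ x, (m * phi m * p x + c * (psi (ℓ₀ * R x / 2) * p x)) ∂μ := by
        refine integral_mono ((integrable_Phi_mul hp hR ℓ₀).const_mul 2)
          ((hp.const_mul _).add hpsi) fun x => ?_
        have hU : 0 ≤ ℓ₀ * R x / 2 := by have := hR0 x; positivity
        have := two_mul_Phi_neg_le hm hm3 hψ hU
        rw [neg_div]
        nlinarith [hp0 x]
    _ = m * phi m * ∫ x, p x ∂μ := by
        rw [integral_add (hp.const_mul _) hpsi, integral_const_mul, integral_const_mul,
          integral_psi_mul_eq_zero_of_isLocalMax hp hR hℓ₀ hmax, mul_zero, add_zero]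

end WeightedExpectation

lemma measurable_rough {d : ℕ} (π : (Fin d → ℝ) → ℝ) : Measurable (rough π) := by
  unfold rough pdLog
  exact (Finset.measurable_sum _ fun i _ =>
    (measurable_fderiv_apply_const ℝ _ _).pow_const 2).const_mul _

theorem acceptance_rate_le_of_maximizer_general (d : ℕ)
    (π : (Fin d → ℝ) → ℝ) (hπpos : ∀ x, 0 < π x)
    (hdens : ∫ x : Fin d → ℝ, π x = 1)
    (m : ℝ) (hm : 0 < m) (hmeq : 2 * Phi (-m) = m * phi m)
    (lhat : ℝ) (hlhat : 0 < lhat)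
    (hmax : ∀ ℓ : ℝ, 0 < ℓ → hfun π ℓ ≤ hfun π lhat) :
    afun π lhat ≤ 2 * Phi (-m) ∧ afun π lhat ≤ 0.2345 := by
  have hψ : psi m = 0 := by rw [psi, hmeq, sub_self]
  have hπ : Integrable π := Integrable.of_integral_ne_zero (by rw [hdens]; exact one_ne_zero)
  have hloc :
      IsLocalMax (fun ℓ => ℓ ^ 2 * ∫ x, Phi (-(ℓ * Real.sqrt (rough π x)) / 2) * π x) lhat := by
    filter_upwards [Ioi_mem_nhds hlhat] with ℓ hℓ
    have := hmax ℓ hℓ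
    rw [hfun, hfun, mul_assoc, mul_assoc] at this
    linarith
  have ha : afun π lhat ≤ m * phi m := by
    have := two_mul_integral_Phi_mul_le hπ (fun x => (hπpos x).le) (measurable_rough π).sqrt
      (fun x => Real.sqrt_nonneg _) hlhat hloc hm
      (by linarith [sq_le_two_of_psi_eq_zero hm hψ]) hψ
    rwa [hdens, mul_one] at this
  have hm1 : 237 / 200 ≤ m := le_of_psi_eq_zero hm hψ
  refine ⟨hmeq ▸ ha, ?_⟩
  calc afun π lhat ≤ m * phi m := ha
    _ ≤ 237 / 200 * phi (237 / 200) :=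
        antitoneOn_mul_phi (mem_Ici.mpr (by norm_num)) (mem_Ici.mpr (by linarith)) hm1
    _ ≤ 0.2345 := mul_phi_237_div_200_le

/-- Let `π` be a positive `C¹` probability density on `ℝ^d` (`d ≥ 1`).
If `ℓ̂ > 0` maximizes `h(ℓ) = 2ℓ²·E[Φ(−ℓ√(I_d(X))/2)]` over `(0,∞)`, then the
asymptotic acceptance rate satisfies `a(ℓ̂) ≤ 2Φ(−m̂)`, where `m̂` is the unique positive
real with `2Φ(−m̂) = m̂·φ(m̂)`; in particular `a(ℓ̂) ≤ 0.2345`. -/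
theorem acceptance_rate_le_of_maximizer (d : ℕ) (hd : 1 ≤ d)
    (π : (Fin d → ℝ) → ℝ) (hπpos : ∀ x, 0 < π x) (hπC1 : ContDiff ℝ 1 π)
    (hdens : ∫ x : Fin d → ℝ, π x = 1)
    (m : ℝ) (hm : 0 < m) (hmeq : 2 * Phi (-m) = m * phi m)
    (hmuniq : ∀ m' : ℝ, 0 < m' → 2 * Phi (-m') = m' * phi m' → m' = m)
    (lhat : ℝ) (hlhat : 0 < lhat)
    (hmax : ∀ ℓ : ℝ, 0 < ℓ → hfun π ℓ ≤ hfun π lhat) :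
    afun π lhat ≤ 2 * Phi (-m) ∧ afun π lhat ≤ 0.2345 :=
  acceptance_rate_le_of_maximizer_general d π hπpos hdens m hm hmeq lhat hlhat hmax
end

section
/- If z is a real random variable with law N(μ, σ²) for μ ∈ ℝ and σ > 0, then E[min(1, e^z)] = Φ(μ/σ) + exp(μ + σ²/2)·Φ(−σ − μ/σ). -/
/-!
Split the expectation at `z = 0`. On `z > 0` the integrand is `1`, contributing
`P(z > 0) = P(-z < 0) = Φ(μ/σ)` since `-z ∼ N(-μ, σ²)`. On `z ≤ 0` it is `e^z`, and completing
the square shows that `e^z` times the density of `N(μ, σ²)` is `exp(μ + σ²/2)` times the density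
of `N(μ + σ², σ²)`, whose mass on `(-∞, 0]` is `Φ(-σ - μ/σ)`.
-/

open MeasureTheory ProbabilityTheory

open Set
open scoped NNReal

lemma Phi_eq_measureReal_Iic (x : ℝ) : Phi x = (gaussianReal 0 1).real (Iic x) := by
  rw [measureReal_def, gaussianReal_apply_eq_integral 0 one_ne_zero,
    ENNReal.toReal_ofReal (setIntegral_nonneg measurableSet_Iic
      fun t _ ↦ gaussianPDFReal_nonneg 0 1 t)]
  simp [Phi, gaussianPDFReal]

lemma gaussianReal_measureReal_Iic {σ : ℝ} (hσ : 0 < σ) (m a : ℝ) :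
    (gaussianReal m (σ ^ 2).toNNReal).real (Iic a) = Phi ((a - m) / σ) := by
  have hstd : (gaussianReal m (σ ^ 2).toNNReal).map (fun x ↦ (x - m) / σ) = gaussianReal 0 1 := by
    rw [← Function.comp_def (· / σ) (· - m), ← Measure.map_map (by fun_prop) (by fun_prop),
      gaussianReal_map_sub_const, gaussianReal_map_div_const, sub_self, zero_div]
    congr
    ext
    simp [max_eq_left (sq_nonneg σ), hσ.ne']
  have hpre : (fun x ↦ (x - m) / σ) ⁻¹' Iic ((a - m) / σ) = Iic a := by
    ext x
    simp [div_le_div_iff_of_pos_right hσ]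
  rw [Phi_eq_measureReal_Iic, ← hstd, map_measureReal_apply (by fun_prop) measurableSet_Iic, hpre]

lemma gaussianReal_measureReal_Ioi {σ : ℝ} (hσ : 0 < σ) (m a : ℝ) :
    (gaussianReal m (σ ^ 2).toNNReal).real (Ioi a) = Phi ((m - a) / σ) := by
  have hv : (σ ^ 2).toNNReal ≠ 0 := by simp [hσ.ne']
  have := nullSingletonClass_gaussianReal (μ := -m) hv
  have hpre : (fun x ↦ -x) ⁻¹' Iio (-a) = Ioi a := by
    ext x
    simp
  rw [← hpre, ← map_measureReal_apply measurable_neg measurableSet_Iio, gaussianReal_map_neg,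
    measureReal_congr Iio_ae_eq_Iic, gaussianReal_measureReal_Iic hσ, neg_sub_neg]

lemma gaussianPDFReal_mul_exp (μ : ℝ) (v : ℝ≥0) (x : ℝ) :
    gaussianPDFReal μ v x * Real.exp x
      = Real.exp (μ + v / 2) * gaussianPDFReal (μ + v) v x := by
  rcases eq_or_ne v 0 with rfl | hv
  · simp [gaussianPDFReal_zero_var]
  have hv' : (v : ℝ) ≠ 0 := by exact_mod_cast hv
  simp only [gaussianPDFReal]
  rw [mul_assoc, ← Real.exp_add, mul_left_comm, ← Real.exp_add]
  congr 2
  field_simp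
  ring

lemma setIntegral_exp_gaussianReal (μ : ℝ) {v : ℝ≥0} (hv : v ≠ 0) {s : Set ℝ}
    (hs : MeasurableSet s) :
    ∫ x in s, Real.exp x ∂gaussianReal μ v
      = Real.exp (μ + v / 2) * (gaussianReal (μ + v) v).real s := by
  calc ∫ x in s, Real.exp x ∂gaussianReal μ v
      = ∫ x in s, gaussianPDFReal μ v x * Real.exp x := by
        rw [← integral_indicator hs, integral_gaussianReal_eq_integral_smul hv,
          ← integral_indicator hs]
        congr with x
        by_cases hx : x ∈ s <;> simp [hx]
    _ = Real.exp (μ + v / 2) * ∫ x in s, gaussianPDFReal (μ + v) v x := by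
        simp_rw [gaussianPDFReal_mul_exp, integral_const_mul]
    _ = Real.exp (μ + v / 2) * (gaussianReal (μ + v) v).real s := by
        rw [measureReal_def, gaussianReal_apply_eq_integral _ hv, ENNReal.toReal_ofReal
          (setIntegral_nonneg hs fun x _ ↦ gaussianPDFReal_nonneg _ _ x)]

lemma integral_min_one_exp {P : Measure ℝ} [IsFiniteMeasure P] :
    ∫ x, min 1 (Real.exp x) ∂P = ∫ x in Iic 0, Real.exp x ∂P + P.real (Ioi 0) := by
  have hint : Integrable (fun x ↦ min 1 (Real.exp x)) P :=
    .of_bound (by fun_prop) 1 (ae_of_all _ fun x ↦ by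
      rw [Real.norm_of_nonneg (by positivity)]; exact min_le_left _ _)
  rw [← integral_add_compl measurableSet_Iic hint, compl_Iic,
    setIntegral_congr_fun measurableSet_Iic fun x hx ↦ min_eq_right (Real.exp_le_one_iff.2 hx),
    setIntegral_congr_fun measurableSet_Ioi fun x hx ↦ min_eq_left (Real.one_le_exp (le_of_lt hx)),
    setIntegral_const, smul_eq_mul, mul_one]

/-- If `z ∼ N(μ, σ²)` with `σ > 0`, then
`E[min(1, e^z)] = Φ(μ/σ) + exp(μ + σ²/2)·Φ(−σ − μ/σ)`. -/
theorem integral_min_one_exp_gaussian (μ σ : ℝ) (hσ : 0 < σ) :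
    ∫ z, min 1 (Real.exp z) ∂(gaussianReal μ ((σ ^ 2).toNNReal)) =
      Phi (μ / σ) + Real.exp (μ + σ ^ 2 / 2) * Phi (-σ - μ / σ) := by
  have hv : (σ ^ 2).toNNReal ≠ 0 := by simp [hσ.ne']
  rw [integral_min_one_exp, setIntegral_exp_gaussianReal μ hv measurableSet_Iic,
    gaussianReal_measureReal_Iic hσ, gaussianReal_measureReal_Ioi hσ,
    Real.coe_toNNReal _ (sq_nonneg σ), add_comm, sub_zero,
    show (0 - (μ + σ ^ 2)) / σ = -σ - μ / σ by field_simp; ring]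
end
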